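/- arXiv:cond-mat/0701651 — 3 statements merged into one kernel-verified Lean document; each statement's English description precedes it below -/
import Mathlib

section
/- For q > 0, λ > 0, and 0 < γ < 1, the integral I(λ) = ∫₀^∞ (q t/(λ+t)^γ) exp(-q t/(λ+t)^γ) dt is finite and satisfies I(λ)/λ^γ → 1/q as λ → ∞. -/
open MeasureTheory Real Set Filter Topology

/-!
Write `F x = x e^{-x}`. The substitution `t = λ^γ u` turns `I(λ)/λ^γ` into
`∫₀^∞ F(q u/(1 + a u)^γ) du` with `a = λ^{γ-1} → 0`, because `γ < 1`. For `0 < a ≤ 1` the argument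
of `F` lies between `q u/(1+u)^γ` and `q u`, so the integrand is dominated by
`q u e^{-q u/(1+u)^γ}`, which is integrable since `u/(c+u)^γ ≥ u^{1-γ} - c^{1-γ}`. Dominated
convergence then gives the limit `∫₀^∞ F(q u) du = Γ(2)/q = 1/q`.
-/

lemma rpow_one_sub_sub_le_div_add_rpow {γ c u : ℝ} (hγ0 : 0 ≤ γ) (hγ1 : γ ≤ 1) (hc : 0 < c)
    (hu : 0 ≤ u) : u ^ (1 - γ) - c ^ (1 - γ) ≤ u / (c + u) ^ γ := by
  have hs : 0 < c + u := by linarith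
  have hsplit : u / (c + u) ^ γ = (c + u) ^ (1 - γ) - c * (c + u) ^ (-γ) := by
    rw [rpow_sub hs, rpow_one, rpow_neg hs.le]
    field_simp
    ring
  have hmono : u ^ (1 - γ) ≤ (c + u) ^ (1 - γ) := rpow_le_rpow hu (by linarith) (by linarith)
  have hanti : c * (c + u) ^ (-γ) ≤ c ^ (1 - γ) := by
    rw [sub_eq_add_neg, rpow_add hc, rpow_one]
    exact mul_le_mul_of_nonneg_left (rpow_le_rpow_of_nonpos hc (by linarith) (by linarith)) hc.le
  linarith

lemma integrableOn_mul_exp_neg_div_add_rpow {b c γ : ℝ} (hb : 0 < b) (hc : 0 < c) (hγ0 : 0 ≤ γ)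
    (hγ1 : γ < 1) : IntegrableOn (fun u => u * exp (-(b * u / (c + u) ^ γ))) (Ioi 0) := by
  have hdom := (integrableOn_rpow_mul_exp_neg_mul_rpow (s := 1) (by norm_num) (sub_pos.2 hγ1)
    hb).const_mul (exp (b * c ^ (1 - γ)))
  refine hdom.mono' (by fun_prop) ?_
  filter_upwards [ae_restrict_mem measurableSet_Ioi] with u (hu : 0 < u)
  have hlow := rpow_one_sub_sub_le_div_add_rpow hγ0 hγ1.le hc hu.le
  calc ‖u * exp (-(b * u / (c + u) ^ γ))‖
      = u * exp (-(b * (u / (c + u) ^ γ))) := by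
        rw [norm_of_nonneg (by positivity), mul_div_assoc]
    _ ≤ u * exp (b * c ^ (1 - γ) + -b * u ^ (1 - γ)) := by
        gcongr
        nlinarith
    _ = exp (b * c ^ (1 - γ)) * (u ^ (1 : ℝ) * exp (-b * u ^ (1 - γ))) := by
        rw [exp_add, rpow_one]
        ring

lemma integrableOn_div_add_rpow_mul_exp_neg {q γ lam : ℝ} (hq : 0 < q) (hlam : 0 < lam)
    (hγ0 : 0 ≤ γ) (hγ1 : γ < 1) :
    IntegrableOn (fun t => (q * t / (lam + t) ^ γ) * exp (-(q * t / (lam + t) ^ γ))) (Ioi 0) := by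
  refine ((integrableOn_mul_exp_neg_div_add_rpow hq hlam hγ0 hγ1).const_mul (q / lam ^ γ)).mono'
    (by fun_prop) ?_
  filter_upwards [ae_restrict_mem measurableSet_Ioi] with t (ht : 0 < t)
  have hpow : lam ^ γ ≤ (lam + t) ^ γ := rpow_le_rpow hlam.le (by linarith) hγ0
  have hlamγ : 0 < lam ^ γ := rpow_pos_of_pos hlam γ
  calc ‖(q * t / (lam + t) ^ γ) * exp (-(q * t / (lam + t) ^ γ))‖
      = (q * t / (lam + t) ^ γ) * exp (-(q * t / (lam + t) ^ γ)) :=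
        norm_of_nonneg (by positivity)
    _ ≤ (q * t / lam ^ γ) * exp (-(q * t / (lam + t) ^ γ)) := by gcongr
    _ = q / lam ^ γ * (t * exp (-(q * t / (lam + t) ^ γ))) := by ring

lemma div_add_rpow_mul_rpow_eq {q γ lam u : ℝ} (hlam : 0 < lam) (hu : 0 ≤ u) :
    q * (lam ^ γ * u) / (lam + lam ^ γ * u) ^ γ = q * u / (1 + lam ^ (γ - 1) * u) ^ γ := by
  have hfactor : lam + lam ^ γ * u = lam * (1 + lam ^ (γ - 1) * u) := by
    rw [rpow_sub hlam, rpow_one]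
    field_simp
  have hpos : 0 ≤ 1 + lam ^ (γ - 1) * u := by positivity
  have hlamγ : 0 < lam ^ γ := rpow_pos_of_pos hlam γ
  rw [hfactor, mul_rpow hlam.le hpos]
  field_simp

lemma setIntegral_Ioi_comp_div_add_rpow_div_rpow (f : ℝ → ℝ) {q γ lam : ℝ} (hlam : 0 < lam) :
    (∫ t in Ioi 0, f (q * t / (lam + t) ^ γ)) / lam ^ γ =
      ∫ u in Ioi 0, f (q * u / (1 + lam ^ (γ - 1) * u) ^ γ) := by
  have hsubst := integral_comp_mul_left_Ioi (fun t => f (q * t / (lam + t) ^ γ)) 0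
    (rpow_pos_of_pos hlam γ)
  rw [mul_zero, smul_eq_mul] at hsubst
  rw [div_eq_inv_mul, ← hsubst]
  refine setIntegral_congr_fun measurableSet_Ioi fun u (hu : 0 < u) => ?_
  simp only [div_add_rpow_mul_rpow_eq hlam hu.le]

lemma integral_mul_mul_exp_neg_mul {q : ℝ} (hq : 0 < q) :
    ∫ u in Ioi 0, q * u * exp (-(q * u)) = 1 / q := by
  have hsubst := integral_comp_mul_left_Ioi (fun x => x * exp (-x)) 0 hq
  rw [mul_zero, smul_eq_mul] at hsubst
  have hGamma : ∫ x in Ioi (0 : ℝ), x * exp (-x) = 1 := by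
    rw [← Gamma_two, Gamma_eq_integral two_pos]
    refine setIntegral_congr_fun measurableSet_Ioi fun x _ => ?_
    norm_num [mul_comm]
  rw [hsubst, hGamma, mul_one, one_div]

lemma tendsto_setIntegral_div_one_add_mul_rpow_mul_exp_neg {q γ : ℝ} (hq : 0 < q) (hγ0 : 0 ≤ γ)
    (hγ1 : γ < 1) :
    Tendsto (fun a => ∫ u in Ioi 0,
        (q * u / (1 + a * u) ^ γ) * exp (-(q * u / (1 + a * u) ^ γ))) (𝓝[>] 0) (𝓝 (1 / q)) := by
  rw [← integral_mul_mul_exp_neg_mul hq]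
  refine tendsto_integral_filter_of_dominated_convergence
    (fun u => q * (u * exp (-(q * u / (1 + u) ^ γ)))) (Eventually.of_forall fun a => by fun_prop)
    ?_ ((integrableOn_mul_exp_neg_div_add_rpow hq one_pos hγ0 hγ1).const_mul q) ?_
  · filter_upwards [Ioo_mem_nhdsGT one_pos] with a ⟨ha0, ha1⟩
    filter_upwards [ae_restrict_mem measurableSet_Ioi] with u (hu : 0 < u)
    have hpos : 0 < (1 + a * u) ^ γ := rpow_pos_of_pos (by positivity) γ
    have hle_one : 1 ≤ (1 + a * u) ^ γ := one_le_rpow (by nlinarith) hγ0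
    have hle : (1 + a * u) ^ γ ≤ (1 + u) ^ γ := rpow_le_rpow (by positivity) (by nlinarith) hγ0
    calc ‖(q * u / (1 + a * u) ^ γ) * exp (-(q * u / (1 + a * u) ^ γ))‖
        = (q * u / (1 + a * u) ^ γ) * exp (-(q * u / (1 + a * u) ^ γ)) :=
          norm_of_nonneg (by positivity)
      _ ≤ (q * u) * exp (-(q * u / (1 + u) ^ γ)) := by
          gcongr
          exact div_le_self (by positivity) hle_one
      _ = q * (u * exp (-(q * u / (1 + u) ^ γ))) := by ring
  · refine Eventually.of_forall fun u => ?_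
    have hcont : ContinuousAt
        (fun a => (q * u / (1 + a * u) ^ γ) * exp (-(q * u / (1 + a * u) ^ γ))) 0 := by
      have hbase : ContinuousAt (fun a => q * u / (1 + a * u) ^ γ) 0 :=
        continuousAt_const.div ((by fun_prop : ContinuousAt (fun a => 1 + a * u) 0).rpow_const
          (Or.inl (by simp))) (by simp)
      exact hbase.mul (continuous_exp.continuousAt.comp hbase.neg)
    simpa using hcont.tendsto.mono_left nhdsWithin_le_nhds

/-- The Laplace-type integral `I(λ) = ∫₀^∞ (qt/(λ+t)^γ) e^{-qt/(λ+t)^γ} dt` is finite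
for every `λ > 0` and satisfies `I(λ)/λ^γ → 1/q` as `λ → ∞`. -/
theorem stmt_9 (q γ : ℝ) (hq : 0 < q) (hγ0 : 0 < γ) (hγ1 : γ < 1) :
    (∀ lam : ℝ, 0 < lam →
      IntegrableOn
        (fun t => (q * t / (lam + t) ^ γ) * Real.exp (-(q * t / (lam + t) ^ γ)))
        (Set.Ioi 0) volume) ∧
    Filter.Tendsto
      (fun lam : ℝ =>
        (∫ t in Set.Ioi (0 : ℝ),
          (q * t / (lam + t) ^ γ) * Real.exp (-(q * t / (lam + t) ^ γ))) / lam ^ γ)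
      Filter.atTop (nhds (1 / q)) := by
  refine ⟨fun lam hlam => integrableOn_div_add_rpow_mul_exp_neg hq hlam hγ0.le hγ1, ?_⟩
  have hscale : Tendsto (fun lam : ℝ => lam ^ (γ - 1)) atTop (𝓝[>] 0) := by
    refine tendsto_nhdsWithin_iff.2 ⟨?_, (eventually_gt_atTop 0).mono fun lam hlam =>
      rpow_pos_of_pos hlam _⟩
    simpa using tendsto_rpow_neg_atTop (y := 1 - γ) (by linarith)
  refine ((tendsto_setIntegral_div_one_add_mul_rpow_mul_exp_neg hq hγ0.le hγ1).comp
    hscale).congr' ?_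
  filter_upwards [eventually_gt_atTop 0] with lam hlam
  exact (setIntegral_Ioi_comp_div_add_rpow_div_rpow (fun x => x * exp (-x)) hlam).symm
end

section
/- For q > 0, λ > 0, and 0 < γ < 1, J(λ) = ∫₀^∞ (q t/(λ+t)^γ) exp(-q t/λ^γ) dt is finite and J(λ)/λ^γ → 1/q as λ → ∞. -/
open MeasureTheory Real Set Filter
open scoped Nat Topology

/-!
Since `λ ^ γ ≤ (λ + t) ^ γ ≤ λ ^ γ (1 + t / λ)` for `0 ≤ γ ≤ 1`, the integrand of `J(λ)` lies
between `c t (1 - t / λ) e^{-ct}` and `c t e^{-ct}`, where `c = q / λ ^ γ`. The Gamma integrals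
`∫₀^∞ t^k e^{-ct} dt = k! / c^(k+1)` then give
`1 / q - 2 λ^(γ-1) / q² ≤ J(λ) / λ ^ γ ≤ 1 / q`, and `λ^(γ-1) → 0` because `γ < 1`.
-/

lemma integrableOn_pow_mul_exp_neg_mul_Ioi (k : ℕ) {c : ℝ} (hc : 0 < c) :
    IntegrableOn (fun t : ℝ => t ^ k * exp (-(c * t))) (Ioi 0) := by
  have hk : (-1 : ℝ) < k := by linarith [k.cast_nonneg (α := ℝ)]
  refine (integrableOn_rpow_mul_exp_neg_mul_rpow hk one_pos hc).congr_fun (fun t _ => ?_)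
    measurableSet_Ioi
  simp [rpow_natCast]

lemma integral_pow_mul_exp_neg_mul_Ioi (k : ℕ) {c : ℝ} (hc : 0 < c) :
    ∫ t in Ioi (0 : ℝ), t ^ k * exp (-(c * t)) = k ! / c ^ (k + 1) := by
  have h := integral_rpow_mul_exp_neg_mul_Ioi (a := k + 1) (by positivity) hc
  simp_rw [add_sub_cancel_right, rpow_natCast, Gamma_nat_eq_factorial] at h
  rw [h, div_rpow zero_le_one hc.le, one_rpow, ← Nat.cast_add_one, rpow_natCast]
  ring

lemma rpow_add_le_rpow_mul_one_add_div {x y γ : ℝ} (hx : 0 < x) (hy : 0 ≤ y) (hγ : γ ≤ 1) :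
    (x + y) ^ γ ≤ x ^ γ * (1 + y / x) := by
  have hxy : x + y = x * (1 + y / x) := by field_simp
  rw [hxy, mul_rpow hx.le (by positivity)]
  gcongr
  exact rpow_le_self_of_one_le (le_add_of_nonneg_right (by positivity)) hγ

noncomputable def slowCoolingIntegrand (q γ lam t : ℝ) : ℝ :=
  q * t / (lam + t) ^ γ * exp (-(q * t / lam ^ γ))

section
variable {q γ lam t : ℝ}

lemma slowCoolingIntegrand_eq :
    slowCoolingIntegrand q γ lam t = q * t / (lam + t) ^ γ * exp (-(q / lam ^ γ * t)) := by
  rw [slowCoolingIntegrand, mul_div_right_comm q t (lam ^ γ)]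

lemma slowCoolingIntegrand_le (hq : 0 ≤ q) (hγ : 0 ≤ γ) (hlam : 0 < lam) (ht : 0 ≤ t) :
    slowCoolingIntegrand q γ lam t ≤ q / lam ^ γ * (t * exp (-(q / lam ^ γ * t))) := by
  rw [slowCoolingIntegrand_eq]
  calc _ ≤ q * t / lam ^ γ * exp (-(q / lam ^ γ * t)) := by
        gcongr
        exact le_add_of_nonneg_right ht
    _ = _ := by ring

lemma le_slowCoolingIntegrand (hq : 0 ≤ q) (hγ : γ ≤ 1) (hlam : 0 < lam) (ht : 0 ≤ t) :
    q / lam ^ γ * (t * exp (-(q / lam ^ γ * t)) - lam⁻¹ * (t ^ 2 * exp (-(q / lam ^ γ * t))))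
      ≤ slowCoolingIntegrand q γ lam t := by
  have ha : 0 < lam ^ γ := rpow_pos_of_pos hlam γ
  have hfactor : q / lam ^ γ * (t - lam⁻¹ * t ^ 2) ≤ q * t / (lam + t) ^ γ := calc
    q / lam ^ γ * (t - lam⁻¹ * t ^ 2) = q * t * (1 - t / lam) / lam ^ γ := by ring
    _ ≤ q * t / (lam ^ γ * (1 + t / lam)) := by
      rw [div_le_div_iff₀ ha (by positivity)]
      have : (1 - t / lam) * (1 + t / lam) ≤ 1 := by nlinarith [sq_nonneg (t / lam)]
      have hqt : 0 ≤ q * t := by positivity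
      nlinarith [mul_le_mul_of_nonneg_left this (mul_nonneg hqt ha.le)]
    _ ≤ q * t / (lam + t) ^ γ := by
      gcongr
      exact rpow_add_le_rpow_mul_one_add_div hlam ht hγ
  rw [slowCoolingIntegrand_eq]
  calc _ = q / lam ^ γ * (t - lam⁻¹ * t ^ 2) * exp (-(q / lam ^ γ * t)) := by ring
    _ ≤ _ := by gcongr

lemma slowCoolingIntegrand_nonneg (hq : 0 ≤ q) (hlam : 0 ≤ lam) (ht : 0 ≤ t) :
    0 ≤ slowCoolingIntegrand q γ lam t := by
  unfold slowCoolingIntegrand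
  positivity

lemma integrableOn_slowCoolingIntegrand (hq : 0 < q) (hγ : 0 ≤ γ) (hlam : 0 < lam) :
    IntegrableOn (slowCoolingIntegrand q γ lam) (Ioi 0) := by
  have hc : 0 < q / lam ^ γ := by positivity
  refine ((integrableOn_pow_mul_exp_neg_mul_Ioi 1 hc).const_mul (q / lam ^ γ)).mono' ?_ ?_
  · exact (by unfold slowCoolingIntegrand; fun_prop :
      Measurable (slowCoolingIntegrand q γ lam)).aestronglyMeasurable
  · filter_upwards [ae_restrict_mem measurableSet_Ioi] with t ht
    rw [norm_of_nonneg (slowCoolingIntegrand_nonneg hq.le hlam.le ht.le), pow_one]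
    exact slowCoolingIntegrand_le hq.le hγ hlam ht.le

lemma integral_slowCoolingIntegrand_div_rpow_le (hq : 0 < q) (hγ : 0 ≤ γ) (hlam : 0 < lam) :
    (∫ t in Ioi 0, slowCoolingIntegrand q γ lam t) / lam ^ γ ≤ 1 / q := by
  have ha : 0 < lam ^ γ := rpow_pos_of_pos hlam γ
  have hc : 0 < q / lam ^ γ := by positivity
  rw [div_le_iff₀ ha]
  calc ∫ t in Ioi 0, slowCoolingIntegrand q γ lam t
      ≤ ∫ t in Ioi 0, q / lam ^ γ * (t ^ 1 * exp (-(q / lam ^ γ * t))) :=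
        setIntegral_mono_on (integrableOn_slowCoolingIntegrand hq hγ hlam)
          ((integrableOn_pow_mul_exp_neg_mul_Ioi 1 hc).const_mul _) measurableSet_Ioi
          fun t ht => by simpa using slowCoolingIntegrand_le hq.le hγ hlam (le_of_lt ht)
    _ = 1 / q * lam ^ γ := by
        rw [integral_const_mul, integral_pow_mul_exp_neg_mul_Ioi 1 hc]
        generalize lam ^ γ = a at ha
        norm_num [Nat.factorial]
        field_simp

lemma le_integral_slowCoolingIntegrand_div_rpow (hq : 0 < q) (hγ0 : 0 ≤ γ) (hγ1 : γ ≤ 1)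
    (hlam : 0 < lam) :
    1 / q - 2 / q ^ 2 * (lam ^ γ / lam)
      ≤ (∫ t in Ioi 0, slowCoolingIntegrand q γ lam t) / lam ^ γ := by
  have ha : 0 < lam ^ γ := rpow_pos_of_pos hlam γ
  have hc : 0 < q / lam ^ γ := by positivity
  have h1 := integrableOn_pow_mul_exp_neg_mul_Ioi 1 hc
  have h2 := integrableOn_pow_mul_exp_neg_mul_Ioi 2 hc
  rw [le_div_iff₀ ha]
  calc (1 / q - 2 / q ^ 2 * (lam ^ γ / lam)) * lam ^ γ
      = ∫ t in Ioi 0, q / lam ^ γ * (t ^ 1 * exp (-(q / lam ^ γ * t))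
          - lam⁻¹ * (t ^ 2 * exp (-(q / lam ^ γ * t)))) := by
        rw [integral_const_mul, integral_sub h1 (h2.const_mul _), integral_const_mul,
          integral_pow_mul_exp_neg_mul_Ioi 1 hc, integral_pow_mul_exp_neg_mul_Ioi 2 hc]
        generalize lam ^ γ = a at ha
        norm_num [Nat.factorial]
        field_simp
    _ ≤ ∫ t in Ioi 0, slowCoolingIntegrand q γ lam t :=
        setIntegral_mono_on ((h1.sub' (h2.const_mul lam⁻¹)).const_mul (q / lam ^ γ))
          (integrableOn_slowCoolingIntegrand hq hγ0 hlam) measurableSet_Ioi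
          fun t ht => by simpa using le_slowCoolingIntegrand hq.le hγ1 hlam (le_of_lt ht)

end

/-- The lower-bound companion integral `J(λ) = ∫₀^∞ (qt/(λ+t)^γ) e^{-qt/λ^γ} dt` is
finite and `J(λ)/λ^γ → 1/q` as `λ → ∞`. -/
theorem stmt_10 (q γ : ℝ) (hq : 0 < q) (hγ0 : 0 < γ) (hγ1 : γ < 1) :
    (∀ lam : ℝ, 0 < lam →
      IntegrableOn
        (fun t => (q * t / (lam + t) ^ γ) * Real.exp (-(q * t / lam ^ γ)))
        (Set.Ioi 0) volume) ∧
    Filter.Tendsto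
      (fun lam : ℝ =>
        (∫ t in Set.Ioi (0 : ℝ),
          (q * t / (lam + t) ^ γ) * Real.exp (-(q * t / lam ^ γ))) / lam ^ γ)
      Filter.atTop (nhds (1 / q)) := by
  refine ⟨fun lam hlam => integrableOn_slowCoolingIntegrand hq hγ0.le hlam, ?_⟩
  have hdecay : Tendsto (fun lam : ℝ => lam ^ γ / lam) atTop (𝓝 0) := by
    refine (tendsto_rpow_neg_atTop (sub_pos.2 hγ1)).congr' ?_
    filter_upwards [eventually_gt_atTop 0] with lam hlam
    rw [neg_sub, rpow_sub_one hlam.ne']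
  have hlower :
      Tendsto (fun lam : ℝ => 1 / q - 2 / q ^ 2 * (lam ^ γ / lam)) atTop (𝓝 (1 / q)) := by
    simpa using (hdecay.const_mul (2 / q ^ 2)).const_sub (1 / q)
  refine tendsto_of_tendsto_of_tendsto_of_le_of_le' hlower tendsto_const_nhds ?_ ?_
  all_goals filter_upwards [eventually_gt_atTop 0] with lam hlam
  · exact le_integral_slowCoolingIntegrand_div_rpow hq hγ0.le hγ1.le hlam
  · exact integral_slowCoolingIntegrand_div_rpow_le hq hγ0.le hlam
end

section
/- For q_i > 0, q_{ij} ≥ 0, λ > 0, and 0 < γ < 1, ∫₀^∞ (q_{ij}/(λ+t)^γ) exp(-q_i t/λ^γ) dt → q_{ij}/q_i as λ → ∞. -/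
/-!
Substituting `t = λ^γ s` turns the integral into `∫₀^∞ q_{ij} e^{-q_i s} ρ_λ(s) ds` with
`ρ_λ(s) = λ^γ / (λ + λ^γ s)^γ = (1 + λ^{γ-1} s)^{-γ}`. For `0 ≤ γ` the factor `ρ_λ` lies in
`[0, 1]`, and for `γ < 1` it tends to `1` pointwise, so dominated convergence gives the limit
`∫₀^∞ q_{ij} e^{-q_i s} ds = q_{ij} / q_i`.
-/

open MeasureTheory Real Set Filter Topology

lemma rpow_div_add_rpow_mul_rpow_le_one {γ lam s : ℝ} (hγ : 0 ≤ γ) (hlam : 0 < lam)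
    (hs : 0 ≤ s) : lam ^ γ / (lam + lam ^ γ * s) ^ γ ≤ 1 := by
  have hlam_le : lam ≤ lam + lam ^ γ * s := le_add_of_nonneg_right (by positivity)
  exact div_le_one_of_le₀ (rpow_le_rpow hlam.le hlam_le hγ) (by positivity)

lemma tendsto_rpow_div_add_rpow_mul_rpow {γ : ℝ} (hγ : γ < 1) {s : ℝ} (hs : 0 ≤ s) :
    Tendsto (fun lam : ℝ => lam ^ γ / (lam + lam ^ γ * s) ^ γ) atTop (𝓝 1) := by
  have hbase : Tendsto (fun lam : ℝ => 1 + lam ^ (γ - 1) * s) atTop (𝓝 1) := by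
    have := (tendsto_rpow_neg_atTop (sub_pos.mpr hγ)).mul_const s
    simpa [neg_sub] using this.const_add 1
  have hpow : Tendsto (fun lam : ℝ => (1 + lam ^ (γ - 1) * s) ^ (-γ)) atTop (𝓝 1) := by
    simpa using hbase.rpow_const (p := -γ) (Or.inl one_ne_zero)
  refine hpow.congr' ?_
  filter_upwards [eventually_gt_atTop 0] with lam hlam
  have hsum : 1 + lam ^ (γ - 1) * s = (lam + lam ^ γ * s) / lam := by
    rw [rpow_sub hlam, rpow_one]
    field_simp
  rw [hsum, rpow_neg (by positivity), div_rpow (by positivity) hlam.le, inv_div]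

lemma tendsto_integral_mul_rpow_div_add_rpow_mul_rpow {f : ℝ → ℝ} {γ : ℝ} (hγ0 : 0 ≤ γ)
    (hγ1 : γ < 1) (hf : IntegrableOn f (Ioi 0)) :
    Tendsto (fun lam : ℝ => ∫ s in Ioi 0, f s * (lam ^ γ / (lam + lam ^ γ * s) ^ γ)) atTop
      (𝓝 (∫ s in Ioi 0, f s)) := by
  refine tendsto_integral_filter_of_dominated_convergence (fun s => ‖f s‖) ?_ ?_ hf.norm ?_
  · exact Eventually.of_forall fun lam =>
      hf.aestronglyMeasurable.mul (Measurable.aestronglyMeasurable (by fun_prop))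
  · filter_upwards [eventually_gt_atTop 0] with lam hlam
    filter_upwards [ae_restrict_mem measurableSet_Ioi] with s (hs : 0 < s)
    have hρ : 0 ≤ lam ^ γ / (lam + lam ^ γ * s) ^ γ := by positivity
    rw [norm_mul, Real.norm_of_nonneg hρ]
    exact mul_le_of_le_one_right (norm_nonneg _)
      (rpow_div_add_rpow_mul_rpow_le_one hγ0 hlam hs.le)
  · filter_upwards [ae_restrict_mem measurableSet_Ioi] with s (hs : 0 < s)
    simpa using (tendsto_rpow_div_add_rpow_mul_rpow hγ1 hs.le).const_mul (f s)

lemma integral_Ioi_div_add_rpow_mul_exp_eq {lam : ℝ} (hlam : 0 < lam) (c q γ : ℝ) :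
    ∫ t in Ioi 0, c / (lam + t) ^ γ * exp (-(q * t / lam ^ γ)) =
      ∫ s in Ioi 0, c * exp (-q * s) * (lam ^ γ / (lam + lam ^ γ * s) ^ γ) := by
  have hlamγ : 0 < lam ^ γ := rpow_pos_of_pos hlam γ
  have hsubst := integral_comp_mul_left_Ioi'
    (fun t => c / (lam + t) ^ γ * exp (-(q * t / lam ^ γ))) 0 hlamγ
  rw [mul_zero, smul_eq_mul, ← integral_const_mul] at hsubst
  rw [← hsubst]
  congr 1 with s
  field_simp

lemma integral_Ioi_mul_exp_neg_mul {q : ℝ} (hq : 0 < q) (c : ℝ) :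
    ∫ s in Ioi 0, c * exp (-q * s) = c / q := by
  rw [integral_const_mul, integral_exp_mul_Ioi (neg_neg_iff_pos.mpr hq)]
  simp [div_eq_mul_inv]

theorem stmt_11_general (qi qij γ : ℝ) (hqi : 0 < qi)
    (hγ0 : 0 < γ) (hγ1 : γ < 1) :
    Filter.Tendsto
      (fun lam : ℝ =>
        ∫ t in Set.Ioi (0 : ℝ), (qij / (lam + t) ^ γ) * Real.exp (-(qi * t / lam ^ γ)))
      Filter.atTop (nhds (qij / qi)) := by
  have hexp : IntegrableOn (fun s => qij * exp (-qi * s)) (Ioi 0) :=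
    (integrableOn_exp_mul_Ioi (neg_neg_iff_pos.mpr hqi) 0).const_mul qij
  rw [← integral_Ioi_mul_exp_neg_mul hqi qij]
  refine (tendsto_integral_mul_rpow_div_add_rpow_mul_rpow hγ0.le hγ1 hexp).congr' ?_
  filter_upwards [eventually_gt_atTop 0] with lam hlam
  exact (integral_Ioi_div_add_rpow_mul_exp_eq hlam qij qi γ).symm

/-- `∫₀^∞ (q_{ij}/(λ+t)^γ) exp(-q_i t/λ^γ) dt → q_{ij}/q_i` as `λ → ∞`. -/
theorem stmt_11 (qi qij γ : ℝ) (hqi : 0 < qi) (hqij : 0 ≤ qij)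
    (hγ0 : 0 < γ) (hγ1 : γ < 1) :
    Filter.Tendsto
      (fun lam : ℝ =>
        ∫ t in Set.Ioi (0 : ℝ), (qij / (lam + t) ^ γ) * Real.exp (-(qi * t / lam ^ γ)))
      Filter.atTop (nhds (qij / qi)) :=
  stmt_11_general qi qij γ hqi hγ0 hγ1
end
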